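/- arXiv:1910.05189 — 2 statements merged into one kernel-verified Lean document; each statement's English description precedes it below -/
import Mathlib

section
/- Let X be an m×m real orthogonal matrix, k ≥ 0 a real number, and V_A, V_B m×n real matrices all of whose entries lie in [0, k]. Let J denote the m×n all-ones matrix, and define the perturbed matrices V_A' = V_A + m·k·J and V_B' = V_B + m·k·J. If 0 ≤ α ≤ 1/(m+2), then every entry of the matrix (1−α)·V_B' − α·Xᵀ·V_A' is nonnegative. -/
open Matrix

theorem perturbed_condition_b
    (m n : ℕ) (X : Matrix (Fin m) (Fin m) ℝ)
    (hX₁ : Xᵀ * X = 1) (hX₂ : X * Xᵀ = 1)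
    (k : ℝ) (hk : 0 ≤ k) (VA VB : Matrix (Fin m) (Fin n) ℝ)
    (hVA : ∀ i j, VA i j ∈ Set.Icc (0 : ℝ) k)
    (hVB : ∀ i j, VB i j ∈ Set.Icc (0 : ℝ) k)
    (J : Matrix (Fin m) (Fin n) ℝ) (hJ : ∀ i j, J i j = 1)
    (α : ℝ) (hα0 : 0 ≤ α) (hα1 : α ≤ 1 / (m + 2))
    (VA' VB' : Matrix (Fin m) (Fin n) ℝ)
    (hVA' : VA' = VA + (m * k) • J) (hVB' : VB' = VB + (m * k) • J) :
    ∀ i j, 0 ≤ ((1 - α) • VB' - α • (Xᵀ * VA')) i j := by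
  intro i j
  -- entries of X are bounded by 1 in absolute value
  have hXb : ∀ l, |X l i| ≤ 1 := by
    intro l
    have h1 : (Xᵀ * X) i i = 1 := by rw [hX₁]; simp
    have h2 : ∑ l, X l i ^ 2 = 1 := by
      rw [Matrix.mul_apply] at h1
      simpa [Matrix.transpose_apply, sq] using h1
    have h3 : X l i ^ 2 ≤ 1 := by
      rw [← h2]
      exact Finset.single_le_sum (fun t _ => sq_nonneg (X t i)) (Finset.mem_univ l)
    nlinarith [sq_abs (X l i), abs_nonneg (X l i)]
  have hVA'e : ∀ l, VA' l j = VA l j + m * k := by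
    intro l; rw [hVA']; simp [hJ]
  have hVA'b : ∀ l, 0 ≤ VA' l j ∧ VA' l j ≤ k + m * k := by
    intro l
    obtain ⟨h0, h1⟩ := hVA l j
    constructor <;> rw [hVA'e l] <;> nlinarith [Nat.cast_nonneg (α := ℝ) m]
  -- bound the sum
  have hsum : ∑ l, Xᵀ i l * VA' l j ≤ m * (k + m * k) := by
    calc ∑ l, Xᵀ i l * VA' l j ≤ ∑ l : Fin m, (k + m * k) := by
          apply Finset.sum_le_sum
          intro l _
          have h := hVA'b l
          calc Xᵀ i l * VA' l j ≤ |Xᵀ i l| * VA' l j := by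
                nlinarith [le_abs_self (Xᵀ i l)]
            _ ≤ 1 * (k + m * k) := by
                apply mul_le_mul (by simpa [Matrix.transpose_apply] using hXb l) h.2 h.1
                norm_num
            _ = k + m * k := by ring
      _ = m * (k + m * k) := by simp [Finset.sum_const]; ring
  have hα2 : α * (m + 2) ≤ 1 := by
    have hm : (0:ℝ) < m + 2 := by positivity
    rw [le_div_iff₀ hm] at hα1
    linarith
  have hα3 : α ≤ 1 := by nlinarith [Nat.cast_nonneg (α := ℝ) m]
  obtain ⟨hB0, hB1⟩ := hVB i j
  have hmk : (0:ℝ) ≤ m * k := by positivity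
  simp only [Matrix.sub_apply, Matrix.smul_apply, Matrix.mul_apply, smul_eq_mul, hVB']
  simp only [Matrix.add_apply, Matrix.smul_apply, hJ, smul_eq_mul, mul_one]
  have h5 : α * ∑ l, Xᵀ i l * VA' l j ≤ α * (m * (k + m * k)) :=
    mul_le_mul_of_nonneg_left hsum hα0
  nlinarith [Nat.cast_nonneg (α := ℝ) m]
end

section
/- Let X be an m×m real orthogonal matrix, k ≥ 0 a real number, and V_A, V_B m×n real matrices all of whose entries lie in [0, k]. Let J denote the m×n all-ones matrix, and define the perturbed matrices V_A' = V_A + m·k·J and V_B' = V_B + m·k·J. If 0 ≤ α ≤ 1/(m+2), then every entry of the matrix (1−α)·V_A' − α·X·V_B' is nonnegative. -/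
open Matrix

theorem perturbed_condition_c
    (m n : ℕ) (X : Matrix (Fin m) (Fin m) ℝ)
    (hX₁ : Xᵀ * X = 1) (hX₂ : X * Xᵀ = 1)
    (k : ℝ) (hk : 0 ≤ k) (VA VB : Matrix (Fin m) (Fin n) ℝ)
    (hVA : ∀ i j, VA i j ∈ Set.Icc (0 : ℝ) k)
    (hVB : ∀ i j, VB i j ∈ Set.Icc (0 : ℝ) k)
    (J : Matrix (Fin m) (Fin n) ℝ) (hJ : ∀ i j, J i j = 1)
    (α : ℝ) (hα0 : 0 ≤ α) (hα1 : α ≤ 1 / (m + 2))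
    (VA' VB' : Matrix (Fin m) (Fin n) ℝ)
    (hVA' : VA' = VA + (m * k) • J) (hVB' : VB' = VB + (m * k) • J) :
    ∀ i j, 0 ≤ ((1 - α) • VA' - α • (X * VB')) i j := by
  intro i j
  have hXle : ∀ l, |X i l| ≤ 1 := by
    intro l
    have h := congrFun (congrFun hX₂ i) i
    simp only [Matrix.mul_apply, Matrix.transpose_apply, Matrix.one_apply_eq] at h
    have hsq : X i l * X i l ≤ 1 := by
      rw [← h]
      exact Finset.single_le_sum (fun t _ => mul_self_nonneg (X i t))
        (Finset.mem_univ l)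
    nlinarith [abs_nonneg (X i l), sq_abs (X i l), sq_nonneg (X i l)]
  have hα2 : α * (m + 2) ≤ 1 := by
    rw [div_eq_mul_inv] at hα1
    have hm2 : (0:ℝ) < (m:ℝ) + 2 := by positivity
    calc α * (m + 2) ≤ (1 * ((m:ℝ)+2)⁻¹) * (m + 2) := by
          apply mul_le_mul_of_nonneg_right hα1 hm2.le
      _ = 1 := by field_simp
  have hα1' : α ≤ 1 := by nlinarith [Nat.cast_nonneg (α := ℝ) m]
  -- bound the mixed sum
  have hS : ∑ l, X i l * VB' l j ≤ m * (k + m * k) := by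
    calc ∑ l, X i l * VB' l j ≤ ∑ _l : Fin m, (k + m * k) := by
          apply Finset.sum_le_sum
          intro l _
          have h1 : (0:ℝ) ≤ VB' l j := by
            rw [hVB']
            simp only [Matrix.add_apply, Matrix.smul_apply, hJ, smul_eq_mul, mul_one]
            have := (hVB l j).1
            positivity
          have h2 : VB' l j ≤ k + m * k := by
            rw [hVB']
            simp only [Matrix.add_apply, Matrix.smul_apply, hJ, smul_eq_mul, mul_one]
            linarith [(hVB l j).2]
          calc X i l * VB' l j ≤ |X i l| * VB' l j :=
                mul_le_mul_of_nonneg_right (le_abs_self _) h1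
            _ ≤ 1 * (k + m * k) :=
                mul_le_mul (hXle l) h2 h1 zero_le_one
            _ = k + m * k := one_mul _
      _ = m * (k + m * k) := by
          rw [Finset.sum_const, Finset.card_univ, Fintype.card_fin, nsmul_eq_mul]
  have hmk : (0:ℝ) ≤ (m:ℝ) * k := by positivity
  have hVAij := hVA i j
  simp only [Matrix.sub_apply, Matrix.smul_apply, Matrix.mul_apply, hVA',
    Matrix.add_apply, hJ, smul_eq_mul, mul_one]
  have hVB'e : ∀ l, VB' l j = VB' l j := fun l => rfl
  have key : α * ∑ l, X i l * VB' l j ≤ α * ((m:ℝ) * (k + m * k)) :=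
    mul_le_mul_of_nonneg_left hS hα0
  have h0 : (0:ℝ) ≤ VA i j := hVAij.1
  nlinarith [key, mul_nonneg hα0 hmk, hmk, h0, hα0, hα1', Nat.cast_nonneg (α := ℝ) m]
end
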